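/- For any bounded linear operator A on a complex Hilbert space, the numerical radius equals w(A) = sup over real θ of ‖Re(e^{iθ}A)‖, where Re(T) = (T + T*)/2. -/

import Mathlib

/-!
Since `⟪(c • A) x, x⟫ = c̄ ⟪A x, x⟫`, the quadratic form of `ℜ (c • A)` is `Re (c̄ ⟪A x, x⟫)`. A
self-adjoint operator has norm equal to the supremum of its quadratic form on the unit sphere, so
`‖ℜ (e^{iθ} A)‖ ≤ w(A)` for every `θ`; conversely, taking `θ = arg ⟪A x, x⟫` rotates `⟪A x, x⟫` onto
the positive real axis and gives `|⟪A x, x⟫| ≤ ‖ℜ (e^{iθ} A)‖`.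
-/

noncomputable section
open ContinuousLinearMap

variable {H : Type*} [NormedAddCommGroup H] [InnerProductSpace ℂ H] [CompleteSpace H]

/-- The numerical radius of a bounded operator. -/
def nrad (A : H →L[ℂ] H) : ℝ :=
  sSup {r : ℝ | ∃ x : H, ‖x‖ = 1 ∧ r = ‖(inner ℂ (A x) x : ℂ)‖}

/-- The absolute value |A| = (A*A)^(1/2) via continuous functional calculus. -/
def oabs (A : H →L[ℂ] H) : H →L[ℂ] H := cfc Real.sqrt (adjoint A * A)

/-- The 2×2 block operator matrix [[A,B],[C,D]] on the Hilbert space H ⊕ H. -/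
def blk (A B C D : H →L[ℂ] H) : WithLp 2 (H × H) →L[ℂ] WithLp 2 (H × H) :=
  ((WithLp.prodContinuousLinearEquiv 2 ℂ H H).symm.toContinuousLinearMap).comp
    ((((A.comp (fst ℂ H H)) + B.comp (snd ℂ H H)).prod
      ((C.comp (fst ℂ H H)) + D.comp (snd ℂ H H))).comp
      (WithLp.prodContinuousLinearEquiv 2 ℂ H H).toContinuousLinearMap)

open scoped InnerProductSpace ComplexConjugate ComplexStarModule
open Complex

lemma Complex.re_conj_exp_arg_mul_I_mul (z : ℂ) : (conj (exp (arg z * I)) * z).re = ‖z‖ := by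
  nth_rewrite 2 [← norm_mul_exp_arg_mul_I z]
  rw [mul_left_comm, conj_mul', norm_exp_ofReal_mul_I]
  simp

section

variable {E : Type*} [NormedAddCommGroup E] [InnerProductSpace ℂ E]

lemma nrad_nonneg (A : E →L[ℂ] E) : 0 ≤ nrad A :=
  Real.sSup_nonneg (by rintro r ⟨x, -, rfl⟩; exact norm_nonneg _)

lemma norm_inner_apply_self_le_nrad (A : E →L[ℂ] E) {x : E} (hx : ‖x‖ = 1) :
    ‖⟪A x, x⟫_ℂ‖ ≤ nrad A := by
  refine le_csSup ⟨‖A‖, ?_⟩ ⟨x, hx, rfl⟩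
  rintro _ ⟨y, hy, rfl⟩
  simpa [hy] using (norm_inner_le_norm (A y) y).trans (by simpa [hy] using le_opNorm A y)

lemma norm_inner_apply_self_le_nrad_mul (A : E →L[ℂ] E) (x : E) :
    ‖⟪A x, x⟫_ℂ‖ ≤ nrad A * ‖x‖ ^ 2 := by
  rcases eq_or_ne x 0 with rfl | hx
  · simp
  set u : E := (‖x‖ : ℂ)⁻¹ • x
  have hu : ‖u‖ = 1 := by simp [u, norm_smul, hx]
  have hxu : x = (‖x‖ : ℂ) • u := by simp [u, smul_smul, hx]
  calc ‖⟪A x, x⟫_ℂ‖ = ‖⟪A u, u⟫_ℂ‖ * ‖x‖ ^ 2 := by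
        rw [hxu, map_smul, inner_smul_left, inner_smul_right]
        simp [norm_smul, hu]
        ring
    _ ≤ nrad A * ‖x‖ ^ 2 := by gcongr; exact norm_inner_apply_self_le_nrad A hu

variable [CompleteSpace E]

lemma ContinuousLinearMap.realPart_eq_half_smul_add_adjoint (B : E →L[ℂ] E) :
    (ℜ B : E →L[ℂ] E) = (1 / 2 : ℝ) • (B + adjoint B) := by
  rw [realPart_apply_coe, star_eq_adjoint, one_div]

lemma ContinuousLinearMap.inner_realPart_apply_self (B : E →L[ℂ] E) (x : E) :
    ⟪(ℜ B : E →L[ℂ] E) x, x⟫_ℂ = (⟪B x, x⟫_ℂ).re := by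
  rw [realPart_apply_coe, smul_apply, add_apply, star_eq_adjoint,
    RCLike.real_smul_eq_coe_smul (K := ℂ), inner_smul_left, inner_add_left, adjoint_inner_left,
    ← inner_conj_symm x, add_conj, RCLike.conj_ofReal]
  push_cast
  ring

lemma ContinuousLinearMap.abs_re_inner_apply_self_le_norm_realPart (B : E →L[ℂ] E) {x : E}
    (hx : ‖x‖ = 1) : |(⟪B x, x⟫_ℂ).re| ≤ ‖(ℜ B : E →L[ℂ] E)‖ := by
  have := rayleighQuotient_le_norm (ℜ B : E →L[ℂ] E) x
  rwa [rayleighQuotient, reApplyInnerSelf_apply, inner_realPart_apply_self, hx, one_pow, div_one,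
    RCLike.re_to_complex, ofReal_re] at this

lemma ContinuousLinearMap.norm_realPart_le {B : E →L[ℂ] E} {M : ℝ} (hM : 0 ≤ M)
    (h : ∀ x, ‖⟪B x, x⟫_ℂ‖ ≤ M * ‖x‖ ^ 2) : ‖(ℜ B : E →L[ℂ] E)‖ ≤ M := by
  rw [norm_eq_iSup_rayleighQuotient _ (ℜ B).2.isSymmetric]
  refine ciSup_le fun x ↦ ?_
  rcases eq_or_ne x 0 with rfl | hx
  · simpa using hM
  rw [rayleighQuotient, reApplyInnerSelf_apply, inner_realPart_apply_self, RCLike.re_to_complex,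
    ofReal_re, abs_div, abs_sq, div_le_iff₀ (by positivity)]
  exact (abs_re_le_norm _).trans (h x)

end

theorem stmt_5 (A : H →L[ℂ] H) :
    nrad A = ⨆ θ : ℝ, ‖(1 / 2 : ℝ) • (Complex.exp (θ * Complex.I) • A
      + adjoint (Complex.exp (θ * Complex.I) • A))‖ := by
  simp_rw [← realPart_eq_half_smul_add_adjoint]
  have hbdd : BddAbove
      (Set.range fun θ : ℝ ↦ ‖(ℜ (exp (θ * I) • A : H →L[ℂ] H) : H →L[ℂ] H)‖) := by
    refine ⟨‖A‖, ?_⟩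
    rintro _ ⟨θ, rfl⟩
    exact (realPart.norm_le (exp (θ * I) • A)).trans_eq
      (by rw [norm_smul, norm_exp_ofReal_mul_I, one_mul])
  refine le_antisymm (Real.sSup_le ?_ ((norm_nonneg _).trans (le_ciSup hbdd 0)))
    (ciSup_le fun θ ↦ norm_realPart_le (nrad_nonneg A) fun x ↦ ?_)
  · rintro _ ⟨x, hx, rfl⟩
    calc ‖⟪A x, x⟫_ℂ‖ = |(⟪(exp (arg ⟪A x, x⟫_ℂ * I) • A) x, x⟫_ℂ).re| := by
          rw [smul_apply, inner_smul_left, re_conj_exp_arg_mul_I_mul, abs_norm]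
      _ ≤ _ := abs_re_inner_apply_self_le_norm_realPart _ hx
      _ ≤ _ := le_ciSup hbdd _
  · rw [smul_apply, inner_smul_left, norm_mul, norm_conj, norm_exp_ofReal_mul_I, one_mul]
    exact norm_inner_apply_self_le_nrad_mul A x
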